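/- For all real numbers b, d and every ε > 0 there exist coprime integers l, n such that |d·l - b·n| < ε. -/

import Mathlib

/-! Approximate `d / b` by a fraction `n / l` in lowest terms with `|l · d / b - n|` as small as
we like (Dirichlet's approximation theorem); multiplying by `|b|` gives the claim. -/

theorem Real.exists_rat_abs_den_mul_sub_num_lt (ξ : ℝ) {δ : ℝ} (hδ : 0 < δ) :
    ∃ q : ℚ, |q.den * ξ - q.num| < δ := by
  obtain ⟨n, hn⟩ := exists_nat_one_div_lt hδ
  obtain ⟨q, hq, -⟩ := Real.exists_rat_abs_sub_le_and_den_le ξ n.succ_pos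
  have hden : (0 : ℝ) < q.den := by exact_mod_cast q.pos
  have hscale : (q.den : ℝ) * ξ - q.num = q.den * (ξ - q) := by
    rw [Rat.cast_def]
    field_simp
  refine ⟨q, ?_⟩
  calc |q.den * ξ - q.num| = q.den * |ξ - q| := by
        rw [hscale, abs_mul, abs_of_pos hden]
    _ ≤ q.den * (1 / ((n + 1 + 1) * q.den)) := by
        gcongr
        exact_mod_cast hq
    _ = 1 / (n + 1 + 1) := by field_simp
    _ ≤ 1 / (n + 1) := by gcongr; linarith
    _ < δ := hn

theorem coprime_rational_approximation (b d : ℝ) (ε : ℝ) (hε : 0 < ε) :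
    ∃ l n : ℤ, IsCoprime l n ∧ |d * (l : ℝ) - b * (n : ℝ)| < ε := by
  rcases eq_or_ne b 0 with rfl | hb
  · exact ⟨0, 1, isCoprime_zero_left.mpr isUnit_one, by simpa using hε⟩
  have hb' : 0 < |b| := abs_pos.mpr hb
  obtain ⟨q, hq⟩ := Real.exists_rat_abs_den_mul_sub_num_lt (d / b) (div_pos hε hb')
  refine ⟨q.den, q.num, q.isCoprime_num_den.symm, ?_⟩
  calc |d * ((q.den : ℤ) : ℝ) - b * q.num| = |b| * |q.den * (d / b) - q.num| := by
        rw [← abs_mul]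
        congr 1
        field_simp
        push_cast
        ring
    _ < |b| * (ε / |b|) := by gcongr
    _ = ε := by field_simp
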